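/- Let ε > 0, let μ* ∈ ℝ^d minimize F over ℝ^d, and set u_1* = 1 + M_X(μ*). Define h_X(v) = inf { M_Y(μ) : μ ∈ ℝ^d, M_X(μ) ≤ v } for v ≥ 0. If t ≥ 1 satisfies t ≤ u_1* ≤ (1 + 2ε/N_1) t, then (N_1/2) log((1 + 2ε/N_1) t) + (N_2/2) log(1 + h_X((1 + 2ε/N_1) t − 1)) ≤ F(μ*) + ε. (This is the key step showing that the Discretization Algorithm's candidate at the grid point following t is an ε-solution of the Behrens–Fisher Problem.) -/

import Mathlib

/-!
Write `c = 1 + 2ε/N₁`. Since `t ≤ u₁*`, the first term exceeds `(N₁/2) log u₁*` by at most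
`(N₁/2) log c ≤ (N₁/2)(c - 1) = ε`. Since `M_X(μ*) = u₁* - 1 ≤ c t - 1`, the point `μ*` is
feasible for `h_X(c t - 1)`, so `0 ≤ h_X(c t - 1) ≤ M_Y(μ*)` and the second term is at most
`(N₂/2) log(1 + M_Y(μ*))`.
-/

open Matrix Real

theorem Matrix.PosDef.dotProduct_inv_mulVec_self_nonneg {n : Type*} [Fintype n] [DecidableEq n]
    {S : Matrix n n ℝ} (hS : S.PosDef) (v : n → ℝ) : 0 ≤ v ⬝ᵥ (S⁻¹ *ᵥ v) := by
  simpa using hS.inv.posSemidef.dotProduct_mulVec_nonneg v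

theorem Real.log_mul_le_log_add_sub_one {c t u : ℝ} (hc : 0 < c) (ht : 0 < t) (htu : t ≤ u) :
    log (c * t) ≤ log u + (c - 1) := by
  rw [log_mul hc.ne' ht.ne']
  linarith [log_le_sub_one_of_pos hc, log_le_log ht htu]

theorem Real.half_mul_log_mul_le_add {N ε t u : ℝ} (hN : 0 < N) (ht : 0 < t) (htu : t ≤ u)
    (hu : u ≤ (1 + 2 * ε / N) * t) :
    N / 2 * log ((1 + 2 * ε / N) * t) ≤ N / 2 * log u + ε := by
  have hc : 0 < 1 + 2 * ε / N := pos_of_mul_pos_left (ht.trans_le (htu.trans hu)) ht.le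
  have h := mul_le_mul_of_nonneg_left (log_mul_le_log_add_sub_one hc ht htu) (half_pos hN).le
  have hε : N / 2 * (1 + 2 * ε / N - 1) = ε := by field_simp; ring
  linarith

theorem Real.log_one_add_sInf_le {α : Type*} {f g : α → ℝ} (hg : ∀ x, 0 ≤ g x) {v : ℝ}
    {a : α} (ha : f a ≤ v) :
    log (1 + sInf {s | ∃ x, f x ≤ v ∧ s = g x}) ≤ log (1 + g a) := by
  have hnonneg : 0 ≤ sInf {s | ∃ x, f x ≤ v ∧ s = g x} :=
    Real.sInf_nonneg (by rintro s ⟨x, -, rfl⟩; exact hg x)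
  have hle : sInf {s | ∃ x, f x ≤ v ∧ s = g x} ≤ g a :=
    csInf_le ⟨0, by rintro s ⟨x, -, rfl⟩; exact hg x⟩ ⟨a, ha, rfl⟩
  exact log_le_log (by linarith) (by linarith)

theorem stmt19_general (d : ℕ)
    (S₂ : Matrix (Fin d) (Fin d) ℝ) (hS₂ : S₂.PosDef)
    (Ybar : Fin d → ℝ) (N₁ N₂ : ℝ) (hN₁ : 0 < N₁) (hN₂ : 0 < N₂)
    (Mx My F : (Fin d → ℝ) → ℝ)
    (hMy : My = fun μ => (Ybar - μ) ⬝ᵥ (S₂⁻¹ *ᵥ (Ybar - μ)))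
    (hF : F = fun μ => (N₁/2) * Real.log (1 + Mx μ) + (N₂/2) * Real.log (1 + My μ))
    (hX : ℝ → ℝ)
    (hhX : hX = fun v => sInf {t : ℝ | ∃ μ : Fin d → ℝ, Mx μ ≤ v ∧ t = My μ})
    (ε : ℝ)
    (μstar : Fin d → ℝ)
    (u₁star : ℝ) (hu₁star : u₁star = 1 + Mx μstar)
    (t : ℝ) (ht1 : 1 ≤ t) (htl : t ≤ u₁star) (htu : u₁star ≤ (1 + 2*ε/N₁) * t) :
    (N₁/2) * Real.log ((1 + 2*ε/N₁) * t)
      + (N₂/2) * Real.log (1 + hX ((1 + 2*ε/N₁) * t - 1)) ≤ F μstar + ε := by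
  subst hu₁star hF hhX
  have hMy_nonneg : ∀ μ, 0 ≤ My μ := fun μ => by
    rw [hMy]; exact hS₂.dotProduct_inv_mulVec_self_nonneg _
  have hfirst := half_mul_log_mul_le_add hN₁ (by linarith) htl htu
  have hfeasible : Mx μstar ≤ (1 + 2*ε/N₁) * t - 1 := le_sub_iff_add_le'.mpr htu
  have hsecond := mul_le_mul_of_nonneg_left (log_one_add_sInf_le hMy_nonneg hfeasible)
    (half_pos hN₂).le
  dsimp only
  linarith

theorem stmt19 (d : ℕ) (hd : 1 ≤ d)
    (S₁ S₂ : Matrix (Fin d) (Fin d) ℝ) (hS₁ : S₁.PosDef) (hS₂ : S₂.PosDef)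
    (Xbar Ybar : Fin d → ℝ) (N₁ N₂ : ℝ) (hN₁ : 0 < N₁) (hN₂ : 0 < N₂)
    (Mx My F : (Fin d → ℝ) → ℝ)
    (hMx : Mx = fun μ => (Xbar - μ) ⬝ᵥ (S₁⁻¹ *ᵥ (Xbar - μ)))
    (hMy : My = fun μ => (Ybar - μ) ⬝ᵥ (S₂⁻¹ *ᵥ (Ybar - μ)))
    (hF : F = fun μ => (N₁/2) * Real.log (1 + Mx μ) + (N₂/2) * Real.log (1 + My μ))
    (hX : ℝ → ℝ)
    (hhX : hX = fun v => sInf {t : ℝ | ∃ μ : Fin d → ℝ, Mx μ ≤ v ∧ t = My μ})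
    (ε : ℝ) (hε : 0 < ε)
    (μstar : Fin d → ℝ) (hmin : ∀ μ : Fin d → ℝ, F μstar ≤ F μ)
    (u₁star : ℝ) (hu₁star : u₁star = 1 + Mx μstar)
    (t : ℝ) (ht1 : 1 ≤ t) (htl : t ≤ u₁star) (htu : u₁star ≤ (1 + 2*ε/N₁) * t) :
    (N₁/2) * Real.log ((1 + 2*ε/N₁) * t)
      + (N₂/2) * Real.log (1 + hX ((1 + 2*ε/N₁) * t - 1)) ≤ F μstar + ε :=
  stmt19_general d S₂ hS₂ Ybar N₁ N₂ hN₁ hN₂ Mx My F hMy hF hX hhX ε μstar u₁star hu₁star t ht1 htl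
    htu
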